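/- Let N be a finite ground set, (N, 𝓜) a matroid of rank K, Z a monotone, submodular, normalized set function on N, c ∈ [0,1] a curvature bound for Z, and g a greedy sequence for (Z, 𝓜) with output G, partial outputs G^i, and increments ρ_i = ρ_{g_i}(G^{i−1}). Let Ω be a basis with an enumeration (ω_1, …, ω_K) satisfying, for every i: G^{i−1} ∪ {ω_i} ∈ 𝓜, and ω_i ∈ G ∩ Ω implies ω_i = g_i. Then Z(Ω) ≤ c·Σ_{i : g_i ∈ G ∖ Ω} ρ_i + Σ_{i : g_i ∈ G ∩ Ω} ρ_i + Σ_{i : ω_i ∈ Ω ∖ G} ρ_{ω_i}(G^{i−1}). -/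

import Mathlib

open Finset

/-- Marginal gain of adding `q` to `S`: `ρ_q(S) = Z(S ∪ {q}) − Z(S)`. -/
def marg {α : Type*} [DecidableEq α] (Z : Finset α → ℝ) (q : α) (S : Finset α) : ℝ :=
  Z (insert q S) - Z S

/-- The set `{g 1, …, g i}` of the first `i` elements of the sequence `g`. -/
def initSeg {α : Type*} [DecidableEq α] (g : ℕ → α) (i : ℕ) : Finset α :=
  (Finset.Icc 1 i).image g

/-!
Telescoping along the greedy chain gives `Z(G) = Σ ρ_i`. Adding `Ω` to `G` one `ω_i` at a time
costs at most `ρ_{ω_i}(G^{i-1})` for each `ω_i ∉ G`, by submodularity since `G^{i-1} ⊆ G`. Adding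
`G` to `Ω` one `g_i` at a time gains at least `(1 - c) ρ_i` for each `g_i ∉ Ω`, by submodularity
and the curvature bound. Comparing the two estimates of `Z(G ∪ Ω)` gives the claim.
-/

section Telescoping

variable {M : Type*} [AddCommGroup M]

theorem sum_Icc_sub_eq_sub (f : ℕ → M) (m : ℕ) :
    ∑ i ∈ Icc 1 m, (f i - f (i - 1)) = f m - f 0 := by
  induction m with
  | zero => simp
  | succ n ih =>
    rw [sum_Icc_succ_top (by omega), ih, Nat.add_sub_cancel]
    abel

variable [PartialOrder M] [IsOrderedAddMonoid M]

theorem sub_le_sum_Icc_of_sub_le {f d : ℕ → M} {m : ℕ}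
    (h : ∀ i ∈ Icc 1 m, f i - f (i - 1) ≤ d i) : f m - f 0 ≤ ∑ i ∈ Icc 1 m, d i := by
  rw [← sum_Icc_sub_eq_sub]
  exact sum_le_sum h

theorem sum_Icc_le_sub_of_le_sub {f d : ℕ → M} {m : ℕ}
    (h : ∀ i ∈ Icc 1 m, d i ≤ f i - f (i - 1)) : ∑ i ∈ Icc 1 m, d i ≤ f m - f 0 := by
  rw [← sum_Icc_sub_eq_sub]
  exact sum_le_sum h

end Telescoping

section InitSeg

variable {α : Type*} [DecidableEq α]

theorem initSeg_zero (g : ℕ → α) : initSeg g 0 = ∅ := by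
  simp [initSeg]

theorem initSeg_mono (g : ℕ → α) : Monotone (initSeg g) := fun _ _ h =>
  image_subset_image (Icc_subset_Icc_right h)

theorem initSeg_eq_insert (g : ℕ → α) {i : ℕ} (hi : 1 ≤ i) :
    initSeg g i = insert (g i) (initSeg g (i - 1)) := by
  obtain ⟨j, rfl⟩ := Nat.exists_eq_add_of_le' hi
  rw [initSeg, ← insert_Icc_right_eq_Icc_add_one (by omega), image_insert]
  rfl

theorem union_initSeg_eq_insert (A : Finset α) (g : ℕ → α) {i : ℕ} (hi : 1 ≤ i) :
    A ∪ initSeg g i = insert (g i) (A ∪ initSeg g (i - 1)) := by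
  rw [initSeg_eq_insert g hi, union_insert]

end InitSeg

section SetFunction

variable {α : Type*} [DecidableEq α] {N : Finset α} {Z : Finset α → ℝ}

theorem marg_eq_zero_of_mem {x : α} {S : Finset α} (hx : x ∈ S) : marg Z x S = 0 := by
  rw [marg, insert_eq_of_mem hx, sub_self]

theorem marg_nonneg (hmono : ∀ S T : Finset α, S ⊆ T → T ⊆ N → Z S ≤ Z T)
    {x : α} {S : Finset α} (hx : x ∈ N) (hS : S ⊆ N) : 0 ≤ marg Z x S :=
  sub_nonneg.2 (hmono _ _ (subset_insert _ _) (insert_subset hx hS))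

theorem marg_le_marg_of_subset (hmono : ∀ S T : Finset α, S ⊆ T → T ⊆ N → Z S ≤ Z T)
    (hsubmod : ∀ S T : Finset α, ∀ x, S ⊆ T → T ⊆ N → x ∈ N → x ∉ T →
      Z (insert x T) - Z T ≤ Z (insert x S) - Z S)
    {x : α} {S T : Finset α} (hST : S ⊆ T) (hT : T ⊆ N) (hx : x ∈ N) :
    marg Z x T ≤ marg Z x S := by
  by_cases hxT : x ∈ T
  · rw [marg_eq_zero_of_mem hxT]
    exact marg_nonneg hmono hx (hST.trans hT)
  · exact hsubmod S T x hST hT hx hxT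

theorem one_sub_mul_marg_le_of_curvature
    (hmono : ∀ S T : Finset α, S ⊆ T → T ⊆ N → Z S ≤ Z T)
    (hsubmod : ∀ S T : Finset α, ∀ x, S ⊆ T → T ⊆ N → x ∈ N → x ∉ T →
      Z (insert x T) - Z T ≤ Z (insert x S) - Z S)
    {c : ℝ} (hc1 : c ≤ 1)
    (hcurv : ∀ S ⊆ N, ∀ j ∈ N, j ∉ S → 0 < marg Z j (∅ : Finset α) →
      (1 - c) * marg Z j (∅ : Finset α) ≤ marg Z j S)
    {x : α} {S T : Finset α} (hST : S ⊆ T) (hT : T ⊆ N) (hx : x ∈ N) (hxT : x ∉ T) :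
    (1 - c) * marg Z x S ≤ marg Z x T := by
  have hS : marg Z x S ≤ marg Z x ∅ :=
    marg_le_marg_of_subset hmono hsubmod (empty_subset S) (hST.trans hT) hx
  rcases le_or_gt (marg Z x ∅) 0 with hle | hpos
  · calc (1 - c) * marg Z x S ≤ 0 :=
          mul_nonpos_of_nonneg_of_nonpos (sub_nonneg.2 hc1) (hS.trans hle)
      _ ≤ marg Z x T := marg_nonneg hmono hx hT
  · calc (1 - c) * marg Z x S ≤ (1 - c) * marg Z x ∅ :=
          mul_le_mul_of_nonneg_left hS (sub_nonneg.2 hc1)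
      _ ≤ marg Z x T := hcurv T hT x hx hxT hpos

theorem eq_sum_marg_initSeg (hZ_empty : Z ∅ = 0) (g : ℕ → α) (m : ℕ) :
    Z (initSeg g m) = ∑ i ∈ Icc 1 m, marg Z (g i) (initSeg g (i - 1)) := by
  have := sum_Icc_sub_eq_sub (fun i => Z (initSeg g i)) m
  rw [initSeg_zero, hZ_empty, sub_zero] at this
  rw [← this]
  refine sum_congr rfl fun i hi => ?_
  rw [marg, ← initSeg_eq_insert g (mem_Icc.1 hi).1]

theorem union_initSeg_le_add_sum_marg
    (hmono : ∀ S T : Finset α, S ⊆ T → T ⊆ N → Z S ≤ Z T)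
    (hsubmod : ∀ S T : Finset α, ∀ x, S ⊆ T → T ⊆ N → x ∈ N → x ∉ T →
      Z (insert x T) - Z T ≤ Z (insert x S) - Z S)
    {A : Finset α} {g ω : ℕ → α} {m : ℕ} (hgA : initSeg g m ⊆ A)
    (hN : A ∪ initSeg ω m ⊆ N) :
    Z (A ∪ initSeg ω m) ≤ Z A + ∑ i ∈ (Icc 1 m).filter (fun i => ω i ∉ A),
      marg Z (ω i) (initSeg g (i - 1)) := by
  have h := sub_le_sum_Icc_of_sub_le (f := fun i => Z (A ∪ initSeg ω i))
    (d := fun i => if ω i ∉ A then marg Z (ω i) (initSeg g (i - 1)) else 0) (m := m) ?_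
  · rw [sum_filter]
    simp only [initSeg_zero, union_empty] at h
    linarith
  intro i hi
  obtain ⟨hi1, him⟩ := mem_Icc.1 hi
  have hprev : A ∪ initSeg ω (i - 1) ⊆ N :=
    (union_subset_union_right (initSeg_mono ω (by omega))).trans hN
  have hωN : ω i ∈ N := hN (mem_union_right A (mem_image_of_mem ω hi))
  rw [union_initSeg_eq_insert A ω hi1]
  split_ifs with hωA
  · rw [insert_eq_of_mem (mem_union_left _ hωA), sub_self]
  · exact marg_le_marg_of_subset hmono hsubmod
      (((initSeg_mono g (by omega)).trans hgA).trans subset_union_left) hprev hωN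

theorem add_mul_sum_marg_le_union_initSeg
    (hmono : ∀ S T : Finset α, S ⊆ T → T ⊆ N → Z S ≤ Z T)
    (hsubmod : ∀ S T : Finset α, ∀ x, S ⊆ T → T ⊆ N → x ∈ N → x ∉ T →
      Z (insert x T) - Z T ≤ Z (insert x S) - Z S)
    {c : ℝ} (hc1 : c ≤ 1)
    (hcurv : ∀ S ⊆ N, ∀ j ∈ N, j ∉ S → 0 < marg Z j (∅ : Finset α) →
      (1 - c) * marg Z j (∅ : Finset α) ≤ marg Z j S)
    {B : Finset α} {g : ℕ → α} {m : ℕ} (hN : B ∪ initSeg g m ⊆ N) :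
    Z B + (1 - c) * ∑ i ∈ (Icc 1 m).filter (fun i => g i ∉ B),
      marg Z (g i) (initSeg g (i - 1)) ≤ Z (B ∪ initSeg g m) := by
  have h := sum_Icc_le_sub_of_le_sub (f := fun i => Z (B ∪ initSeg g i))
    (d := fun i => if g i ∉ B then (1 - c) * marg Z (g i) (initSeg g (i - 1)) else 0)
    (m := m) ?_
  · rw [mul_sum, sum_filter]
    simp only [initSeg_zero, union_empty] at h
    linarith
  intro i hi
  obtain ⟨hi1, him⟩ := mem_Icc.1 hi
  have hprev : B ∪ initSeg g (i - 1) ⊆ N :=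
    (union_subset_union_right (initSeg_mono g (by omega))).trans hN
  have hgN : g i ∈ N := hN (mem_union_right B (mem_image_of_mem g hi))
  rw [union_initSeg_eq_insert B g hi1]
  split_ifs with hgB
  · rw [insert_eq_of_mem (mem_union_left _ hgB), sub_self]
  · by_cases hgG : g i ∈ initSeg g (i - 1)
    · rw [marg_eq_zero_of_mem hgG, mul_zero,
        insert_eq_of_mem (mem_union_right B hgG), sub_self]
    · exact one_sub_mul_marg_le_of_curvature hmono hsubmod hc1 hcurv subset_union_right
        hprev hgN (by simp [hgB, hgG])

end SetFunction

theorem greedy_optimal_decomposition_bound_general {α : Type*} [DecidableEq α]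
    (N : Finset α) (M : Finset α → Prop)
    (hM_ground : ∀ S, M S → S ⊆ N)
    (K : ℕ)
    (Z : Finset α → ℝ)
    (hZ_mono : ∀ S T : Finset α, S ⊆ T → T ⊆ N → Z S ≤ Z T)
    (hZ_submod : ∀ S T : Finset α, ∀ x, S ⊆ T → T ⊆ N → x ∈ N → x ∉ T →
      Z (insert x T) - Z T ≤ Z (insert x S) - Z S)
    (hZ_empty : Z ∅ = 0)
    (c : ℝ) (hc1 : c ≤ 1)
    (hcurv : ∀ S ⊆ N, ∀ j ∈ N, j ∉ S → 0 < marg Z j (∅ : Finset α) →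
      (1 - c) * marg Z j (∅ : Finset α) ≤ marg Z j S)
    (g : ℕ → α) (hG_M : M (initSeg g K))
    (Ω : Finset α) (hΩ_M : M Ω)
    (ω : ℕ → α)
    (hω_img : (Finset.Icc 1 K).image ω = Ω)
 :
    Z Ω ≤ c * (∑ i ∈ (Finset.Icc 1 K).filter fun i => g i ∉ Ω,
        marg Z (g i) (initSeg g (i - 1)))
      + (∑ i ∈ (Finset.Icc 1 K).filter fun i => g i ∈ Ω,
        marg Z (g i) (initSeg g (i - 1)))
      + ∑ i ∈ (Finset.Icc 1 K).filter fun i => ω i ∉ initSeg g K,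
        marg Z (ω i) (initSeg g (i - 1)) := by
  have hΩ : initSeg ω K = Ω := hω_img
  have hN : initSeg g K ∪ Ω ⊆ N := union_subset (hM_ground _ hG_M) (hM_ground _ hΩ_M)
  have hupper := union_initSeg_le_add_sum_marg hZ_mono hZ_submod subset_rfl (hΩ ▸ hN)
  have hlower := add_mul_sum_marg_le_union_initSeg hZ_mono hZ_submod hc1 hcurv
    (B := Ω) (union_comm _ Ω ▸ hN)
  rw [hΩ, union_comm] at hupper
  have hsplit := sum_filter_add_sum_filter_not (Icc 1 K) (fun i => g i ∈ Ω)
    (fun i => marg Z (g i) (initSeg g (i - 1)))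
  rw [← eq_sum_marg_initSeg hZ_empty g K] at hsplit
  linarith

/-- With `Ω` a basis ordered against the greedy solution,
`Z(Ω) ≤ c·Σ_{i : g_i ∈ G ∖ Ω} ρ_i + Σ_{i : g_i ∈ G ∩ Ω} ρ_i
  + Σ_{i : ω_i ∈ Ω ∖ G} ρ_{ω_i}(G^{i−1})`. -/
theorem greedy_optimal_decomposition_bound {α : Type*} [DecidableEq α]
    (N : Finset α) (M : Finset α → Prop)
    (hM_ground : ∀ S, M S → S ⊆ N) (hM_empty : M ∅)
    (hM_down : ∀ S T : Finset α, M T → S ⊆ T → M S)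
    (hM_aug : ∀ S T : Finset α, M S → M T → S.card < T.card → ∃ x ∈ T \ S, M (insert x S))
    (K : ℕ) (hK_le : ∀ S, M S → S.card ≤ K) (hK_ex : ∃ B, M B ∧ B.card = K)
    (Z : Finset α → ℝ)
    (hZ_mono : ∀ S T : Finset α, S ⊆ T → T ⊆ N → Z S ≤ Z T)
    (hZ_submod : ∀ S T : Finset α, ∀ x, S ⊆ T → T ⊆ N → x ∈ N → x ∉ T →
      Z (insert x T) - Z T ≤ Z (insert x S) - Z S)
    (hZ_empty : Z ∅ = 0)
    (c : ℝ) (hc0 : 0 ≤ c) (hc1 : c ≤ 1)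
    (hcurv : ∀ S ⊆ N, ∀ j ∈ N, j ∉ S → 0 < marg Z j (∅ : Finset α) →
      (1 - c) * marg Z j (∅ : Finset α) ≤ marg Z j S)
    (g : ℕ → α) (hg_inj : Set.InjOn g (Set.Icc 1 K)) (hG_M : M (initSeg g K))
    (hg_max : ∀ i ∈ Finset.Icc 1 K, ∀ x ∈ N, x ∉ initSeg g (i - 1) →
      M (insert x (initSeg g (i - 1))) →
      marg Z x (initSeg g (i - 1)) ≤ marg Z (g i) (initSeg g (i - 1)))
    (Ω : Finset α) (hΩ_M : M Ω) (hΩ_card : Ω.card = K)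
    (ω : ℕ → α) (hω_inj : Set.InjOn ω (Set.Icc 1 K))
    (hω_img : (Finset.Icc 1 K).image ω = Ω)
    (hω_feas : ∀ i ∈ Finset.Icc 1 K, M (insert (ω i) (initSeg g (i - 1))))
    (hω_int : ∀ i ∈ Finset.Icc 1 K, ω i ∈ initSeg g K → ω i = g i)
 :
    Z Ω ≤ c * (∑ i ∈ (Finset.Icc 1 K).filter fun i => g i ∉ Ω,
        marg Z (g i) (initSeg g (i - 1)))
      + (∑ i ∈ (Finset.Icc 1 K).filter fun i => g i ∈ Ω,
        marg Z (g i) (initSeg g (i - 1)))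
      + ∑ i ∈ (Finset.Icc 1 K).filter fun i => ω i ∉ initSeg g K,
        marg Z (ω i) (initSeg g (i - 1)) :=
  greedy_optimal_decomposition_bound_general N M hM_ground K Z hZ_mono hZ_submod hZ_empty c hc1
    hcurv g hG_M Ω hΩ_M ω hω_img
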